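/- Let φ : ℝⁿ → ℝ be a smooth ℤⁿ-periodic function such that u(x) = ½|x|² + φ(x) has positive definite Hessian everywhere. Then the gradient map ∇u : ℝⁿ → ℝⁿ is a bijection satisfying ∇u(x + k) = ∇u(x) + k for all k ∈ ℤⁿ, and the Legendre transform v(y) = sup_{x ∈ ℝⁿ} (y·x − u(x)) is a smooth function of the form v(y) = ½|y|² + ψ(y) for a smooth ℤⁿ-periodic function ψ : ℝⁿ → ℝ, characterized by v(∇u(x)) + u(x) = ∇u(x)·x for all x. -/

import Mathlib

open MeasureTheory Matrix

/-- Partial derivative in the `i`-th coordinate direction. -/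
noncomputable def pd {n : ℕ} (i : Fin n) (f : (Fin n → ℝ) → ℝ) (x : Fin n → ℝ) : ℝ :=
  fderiv ℝ f x (Pi.single i 1)

/-- Hessian matrix `(u_{ij})` of `u` at `x`. -/
noncomputable def hess {n : ℕ} (u : (Fin n → ℝ) → ℝ) (x : Fin n → ℝ) :
    Matrix (Fin n) (Fin n) ℝ :=
  Matrix.of fun i j => pd i (pd j u) x

/-- `f : ℝⁿ → ℝ` is ℤⁿ-periodic. -/
def ZPer {n : ℕ} (f : (Fin n → ℝ) → ℝ) : Prop :=
  ∀ (x : Fin n → ℝ) (k : Fin n → ℤ), f (x + fun i => (k i : ℝ)) = f x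

/-- Abreu's operator `∑_{i,j} ∂²u^{ij}/∂x_i∂x_j`, where `(u^{ij})` is the inverse Hessian. -/
noncomputable def abreuOp {n : ℕ} (u : (Fin n → ℝ) → ℝ) (x : Fin n → ℝ) : ℝ :=
  ∑ i, ∑ j, pd i (pd j (fun z => (hess u z)⁻¹ i j)) x

/-!
`∇u = id + ∇φ` commutes with integer translations because `∇φ` is periodic. Since `φ` is
bounded, `y ⬝ᵥ x - u x = ½|y|² - (φ x + ½|x - y|²)` attains its maximum, at a point where
`∇u = y`; so `∇u` is onto, and the positive definite Hessian makes it strictly monotone, hence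
injective. Thus the supremum defining `v (∇u x)` is attained exactly at `x`, which gives
`v (∇u x) + u x = ∇u x ⬝ᵥ x`, and `v = (∇u ⬝ᵥ id - u) ∘ (∇u)⁻¹` is smooth by the inverse function
theorem. Finally `v y - ½|y|²` is minus the Moreau envelope `inf_x (φ x + ½|x - y|²)` of `φ`,
which is periodic because shifting `x` and `y` by the same integer vector leaves it unchanged.
-/

section

open Set Function

variable {n : ℕ}

noncomputable def grad (u : (Fin n → ℝ) → ℝ) (x : Fin n → ℝ) : Fin n → ℝ :=
  fun i => pd i u x

noncomputable def legendre (u : (Fin n → ℝ) → ℝ) (y : Fin n → ℝ) : ℝ :=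
  sSup (range fun x => y ⬝ᵥ x - u x)

section Calculus

variable {u : (Fin n → ℝ) → ℝ}

theorem ContDiff.pd {m : WithTop ℕ∞} (hu : ContDiff ℝ (m + 1) u) (i : Fin n) :
    ContDiff ℝ m (pd i u) :=
  (hu.fderiv_right le_rfl).clm_apply contDiff_const

theorem ContDiff.grad {m : WithTop ℕ∞} (hu : ContDiff ℝ (m + 1) u) : ContDiff ℝ m (grad u) :=
  contDiff_pi.2 hu.pd

-- `hess u x i j = ∂ᵢ∂ⱼu`, so the Jacobian of `grad u` is its transpose.
theorem hasFDerivAt_grad (hu : ContDiff ℝ 2 u) (x : Fin n → ℝ) :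
    HasFDerivAt (grad u) (hess u x)ᵀ.mulVecLin.toContinuousLinearMap x := by
  refine hasFDerivAt_pi'.2 fun i => ?_
  have hd : HasFDerivAt (pd i u) (fderiv ℝ (pd i u) x) x :=
    ((hu.pd (m := 1) i).differentiable one_ne_zero x).hasFDerivAt
  refine hd.congr_fderiv ?_
  apply ContinuousLinearMap.coe_injective
  refine (Pi.basisFun ℝ (Fin n)).ext fun j => ?_
  simp [hess, pd]

theorem injective_of_hasFDerivAt_posDef {g : (Fin n → ℝ) → Fin n → ℝ}
    {A : (Fin n → ℝ) → Matrix (Fin n) (Fin n) ℝ}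
    (hg : ∀ x, HasFDerivAt g (A x).mulVecLin.toContinuousLinearMap x) (hA : ∀ x, (A x).PosDef) :
    Injective g := by
  intro x z hxz
  by_contra hne
  set d := x - z
  have hd : d ≠ 0 := sub_ne_zero.2 hne
  set F : ℝ → ℝ := fun t => d ⬝ᵥ g (z + t • d)
  have hF : ∀ t, HasDerivAt F (d ⬝ᵥ (A (z + t • d) *ᵥ d)) t := by
    intro t
    have hline : HasDerivAt (fun t : ℝ => z + t • d) d t := by
      simpa using ((hasDerivAt_id t).smul_const d).const_add z
    have hgt := hasDerivAt_pi.1 ((hg (z + t • d)).comp_hasDerivAt t hline)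
    exact HasDerivAt.fun_sum fun i _ => (hgt i).const_mul (d i)
  have hmono : StrictMono F :=
    strictMono_of_hasDerivAt_pos hF fun t => (hA (z + t • d)).dotProduct_mulVec_pos hd
  have h01 := hmono zero_lt_one
  simp only [F, zero_smul, add_zero, one_smul, d, add_sub_cancel, hxz] at h01
  exact lt_irrefl _ h01

theorem grad_injective_of_posDef (hu : ContDiff ℝ 2 u) (hpos : ∀ x, (hess u x).PosDef) :
    Injective (grad u) :=
  injective_of_hasFDerivAt_posDef (hasFDerivAt_grad hu) fun x => (hpos x).transpose

theorem grad_eq_of_forall_le {x₀ y : Fin n → ℝ} (hu : DifferentiableAt ℝ u x₀)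
    (hmax : ∀ x, y ⬝ᵥ x - u x ≤ y ⬝ᵥ x₀ - u x₀) : grad u x₀ = y := by
  funext i
  set e : Fin n → ℝ := Pi.single i 1
  have hline : HasDerivAt (fun t : ℝ => x₀ + t • e) e 0 := by
    simpa using ((hasDerivAt_id (0 : ℝ)).smul_const e).const_add x₀
  have hu' : HasDerivAt (fun t : ℝ => u (x₀ + t • e)) (pd i u x₀) 0 := by
    have hu₀ : HasFDerivAt u (fderiv ℝ u x₀) (x₀ + (0 : ℝ) • e) := by simpa using hu.hasFDerivAt
    exact hu₀.comp_hasDerivAt 0 hline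
  have hdot : HasDerivAt (fun t : ℝ => y ⬝ᵥ (x₀ + t • e)) (y i) 0 := by
    simp only [dotProduct_add, dotProduct_smul, e, dotProduct_single_one, smul_eq_mul]
    simpa using ((hasDerivAt_id (0 : ℝ)).mul_const (y i)).const_add (y ⬝ᵥ x₀)
  have hloc : IsLocalMax (fun t : ℝ => y ⬝ᵥ (x₀ + t • e) - u (x₀ + t • e)) 0 :=
    Filter.Eventually.of_forall fun t => by simpa using hmax (x₀ + t • e)
  exact (sub_eq_zero.1 (hloc.hasDerivAt_eq_zero (hdot.sub hu'))).symm

end Calculus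

theorem ContDiff.invFun_of_bijective {𝕂 E F : Type*} [RCLike 𝕂] [NormedAddCommGroup E]
    [NormedSpace 𝕂 E] [CompleteSpace E] [NormedAddCommGroup F] [NormedSpace 𝕂 F]
    {m : WithTop ℕ∞} {f : E → F} {f' : E → E ≃L[𝕂] F} (hm : m ≠ 0) (hf : ContDiff 𝕂 m f)
    (hbij : Bijective f) (hf' : ∀ x, HasFDerivAt f (f' x : E →L[𝕂] F) x) :
    ContDiff 𝕂 m (invFun f) := by
  refine contDiff_iff_contDiffAt.2 fun y => ?_
  obtain ⟨a, rfl⟩ := hbij.2 y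
  have hfa : ContDiffAt 𝕂 m f a := hf.contDiffAt
  refine (hfa.to_localInverse (hf' a) hm).congr_of_eventuallyEq ?_
  filter_upwards [(hfa.hasStrictFDerivAt' (hf' a) hm).eventually_right_inverse] with z hz
  exact hbij.1 ((rightInverse_invFun hbij.2 z).trans hz.symm)

section Legendre

variable {u : (Fin n → ℝ) → ℝ}

theorem legendre_eq_of_forall_le {x₀ y : Fin n → ℝ}
    (hmax : ∀ x, y ⬝ᵥ x - u x ≤ y ⬝ᵥ x₀ - u x₀) :
    legendre u y = y ⬝ᵥ x₀ - u x₀ :=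
  IsGreatest.csSup_eq ⟨⟨x₀, rfl⟩, by rintro _ ⟨x, rfl⟩; exact hmax x⟩

theorem legendre_grad_add (hu : Differentiable ℝ u) (hinj : Injective (grad u))
    (hmax : ∀ y, ∃ x₀, ∀ x, y ⬝ᵥ x - u x ≤ y ⬝ᵥ x₀ - u x₀) (x : Fin n → ℝ) :
    legendre u (grad u x) + u x = grad u x ⬝ᵥ x := by
  obtain ⟨x₀, hx₀⟩ := hmax (grad u x)
  obtain rfl : x₀ = x := hinj (grad_eq_of_forall_le (hu x₀) hx₀)
  rw [legendre_eq_of_forall_le hx₀, sub_add_cancel]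

theorem grad_bijective_of_posDef (hu : ContDiff ℝ 2 u) (hpos : ∀ x, (hess u x).PosDef)
    (hmax : ∀ y, ∃ x₀, ∀ x, y ⬝ᵥ x - u x ≤ y ⬝ᵥ x₀ - u x₀) : Bijective (grad u) :=
  ⟨grad_injective_of_posDef hu hpos, fun y =>
    (hmax y).imp fun x₀ hx₀ => grad_eq_of_forall_le (hu.differentiable two_ne_zero x₀) hx₀⟩

theorem contDiff_legendre {m : WithTop ℕ∞} (hm : 1 ≤ m) (hu : ContDiff ℝ (m + 1) u)
    (hpos : ∀ x, (hess u x).PosDef) (hmax : ∀ y, ∃ x₀, ∀ x, y ⬝ᵥ x - u x ≤ y ⬝ᵥ x₀ - u x₀) :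
    ContDiff ℝ m (legendre u) := by
  have hu₂ : ContDiff ℝ 2 u := hu.of_le (by simpa [one_add_one_eq_two] using add_le_add_left hm 1)
  have hbij := grad_bijective_of_posDef hu₂ hpos hmax
  have hinv : ContDiff ℝ m (invFun (grad u)) :=
    hu.grad.invFun_of_bijective (zero_lt_one.trans_le hm).ne' hbij
      (f' := fun x =>
        ((hess u x)ᵀ.toLinearEquiv' (hpos x).transpose.isUnit.invertible).toContinuousLinearEquiv)
      (hasFDerivAt_grad hu₂)
  have hG : ContDiff ℝ m fun x => grad u x ⬝ᵥ x - u x := by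
    refine (ContDiff.sum fun i _ => ?_).sub (hu.of_le le_self_add)
    exact (contDiff_pi.1 hu.grad i).mul (contDiff_apply ℝ ℝ i)
  have hlegendre : legendre u = (fun x => grad u x ⬝ᵥ x - u x) ∘ invFun (grad u) := by
    funext y
    obtain ⟨x, rfl⟩ := hbij.2 y
    rw [Function.comp_apply, leftInverse_invFun hbij.1 x,
      ← legendre_grad_add (hu₂.differentiable two_ne_zero) hbij.1 hmax x, add_sub_cancel_right]
  rw [hlegendre]
  exact hG.comp hinv

end Legendre

section Periodic

noncomputable def halfSqNorm (x : Fin n → ℝ) : ℝ := (1 / 2 : ℝ) * ∑ i, x i ^ 2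

theorem contDiff_halfSqNorm {m : WithTop ℕ∞} : ContDiff ℝ m (halfSqNorm (n := n)) :=
  contDiff_const.mul (ContDiff.sum fun i _ => (contDiff_apply ℝ ℝ i).pow 2)

theorem pd_halfSqNorm (i : Fin n) (x : Fin n → ℝ) : pd i halfSqNorm x = x i := by
  have h : HasFDerivAt halfSqNorm _ x := (HasFDerivAt.fun_sum fun j (_ : j ∈ Finset.univ) =>
    (hasFDerivAt_apply (𝕜 := ℝ) j x).pow 2).const_mul (1 / 2 : ℝ)
  rw [pd, h.fderiv]
  simp [Pi.single_apply]

variable {φ : (Fin n → ℝ) → ℝ}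

theorem grad_halfSqNorm_add (hφ : Differentiable ℝ φ) (x : Fin n → ℝ) :
    grad (fun y => halfSqNorm y + φ y) x = x + grad φ x := by
  funext i
  have hq : DifferentiableAt ℝ halfSqNorm x :=
    (contDiff_halfSqNorm (m := 1)).differentiable one_ne_zero x
  rw [grad, pd, fderiv_fun_add hq (hφ x), _root_.add_apply, ← pd, pd_halfSqNorm]
  rfl

theorem ZPer.grad_add_intCast (hper : ZPer φ) (x : Fin n → ℝ) (k : Fin n → ℤ) :
    grad φ (x + fun i => (k i : ℝ)) = grad φ x := by
  have hφk : (fun z => φ (z + fun i => (k i : ℝ))) = φ := funext fun z => hper z k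
  funext i
  rw [grad, grad, pd, pd, ← fderiv_comp_add_right, hφk]

theorem ZPer.grad_halfSqNorm_add_add_intCast (hφ : Differentiable ℝ φ) (hper : ZPer φ)
    (x : Fin n → ℝ) (k : Fin n → ℤ) :
    grad (fun y => halfSqNorm y + φ y) (x + fun i => (k i : ℝ)) =
      grad (fun y => halfSqNorm y + φ y) x + fun i => (k i : ℝ) := by
  rw [grad_halfSqNorm_add hφ, grad_halfSqNorm_add hφ, hper.grad_add_intCast, add_right_comm]

theorem ZPer.exists_abs_le (hφ : Continuous φ) (hper : ZPer φ) : ∃ C, ∀ x, |φ x| ≤ C := by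
  obtain ⟨C, hC⟩ := (isCompact_Icc (a := (0 : Fin n → ℝ)) (b := 1)).exists_bound_of_continuousOn
    hφ.continuousOn
  refine ⟨C, fun x => ?_⟩
  have hfract : (fun i => Int.fract (x i)) ∈ Icc (0 : Fin n → ℝ) 1 :=
    ⟨fun i => Int.fract_nonneg (x i), fun i => (Int.fract_lt_one (x i)).le⟩
  have hx : x = (fun i => Int.fract (x i)) + fun i => ((⌊x i⌋ : ℤ) : ℝ) :=
    funext fun i => (Int.fract_add_floor (x i)).symm
  rw [hx, hper]
  exact hC _ hfract

theorem sq_div_two_lt_halfSqNorm {R : ℝ} {x : Fin n → ℝ} (hR : 0 ≤ R) (hx : R < ‖x‖) :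
    R ^ 2 / 2 < halfSqNorm x := by
  obtain ⟨i, hi⟩ : ∃ i, R < ‖x i‖ := by
    by_contra! h
    exact hx.not_ge ((pi_norm_le_iff_of_nonneg hR).2 h)
  have hRi : R ^ 2 < x i ^ 2 := by
    rw [Real.norm_eq_abs] at hi
    nlinarith [abs_nonneg (x i), sq_abs (x i)]
  have hsum : x i ^ 2 ≤ ∑ j, x j ^ 2 :=
    Finset.single_le_sum (f := fun j => x j ^ 2) (fun j _ => sq_nonneg _) (Finset.mem_univ i)
  rw [halfSqNorm]
  linarith

theorem exists_forall_le_add_halfSqNorm_sub (hφ : Continuous φ) {C : ℝ} (hC : ∀ x, |φ x| ≤ C)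
    (y : Fin n → ℝ) : ∃ x₀, ∀ x, φ x₀ + halfSqNorm (x₀ - y) ≤ φ x + halfSqNorm (x - y) := by
  have hcont : Continuous fun x => φ x + halfSqNorm (x - y) :=
    hφ.add (contDiff_halfSqNorm (m := 0).continuous.comp (continuous_id.sub continuous_const))
  have hC₀ : 0 ≤ C := (abs_nonneg _).trans (hC y)
  -- outside this ball `½|x - y|² > 2C ≥ φ y - φ x`
  refine hcont.exists_forall_le' y ?_
  filter_upwards [(isCompact_closedBall y (2 * C + 1)).compl_mem_cocompact] with x hx
  rw [mem_compl_iff, Metric.mem_closedBall, not_le, dist_eq_norm] at hx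
  have hfar := sq_div_two_lt_halfSqNorm (by linarith) hx
  have hy := abs_le.1 (hC y)
  have hx := abs_le.1 (hC x)
  have h₀ : halfSqNorm (y - y) = 0 := by simp [halfSqNorm]
  nlinarith

noncomputable def moreauEnvelope (φ : (Fin n → ℝ) → ℝ) (y : Fin n → ℝ) : ℝ :=
  sInf (range fun x => φ x + halfSqNorm (x - y))

theorem dotProduct_sub_halfSqNorm_add (x y : Fin n → ℝ) :
    y ⬝ᵥ x - (halfSqNorm x + φ x) = halfSqNorm y - (φ x + halfSqNorm (x - y)) := by
  have h : ∑ i, (x - y) i ^ 2 = ∑ i, x i ^ 2 - 2 * (y ⬝ᵥ x) + ∑ i, y i ^ 2 := by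
    simp only [dotProduct, Pi.sub_apply, Finset.mul_sum, ← Finset.sum_sub_distrib,
      ← Finset.sum_add_distrib]
    exact Finset.sum_congr rfl fun i _ => by ring
  rw [halfSqNorm, halfSqNorm, halfSqNorm, h]
  ring

theorem exists_forall_dotProduct_sub_le (hφ : Continuous φ) {C : ℝ} (hC : ∀ x, |φ x| ≤ C)
    (y : Fin n → ℝ) :
    ∃ x₀, ∀ x, y ⬝ᵥ x - (halfSqNorm x + φ x) ≤ y ⬝ᵥ x₀ - (halfSqNorm x₀ + φ x₀) :=
  (exists_forall_le_add_halfSqNorm_sub hφ hC y).imp fun x₀ hx₀ x => by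
    simpa only [dotProduct_sub_halfSqNorm_add, sub_le_sub_iff_left] using hx₀ x

theorem legendre_halfSqNorm_add (hφ : Continuous φ) {C : ℝ} (hC : ∀ x, |φ x| ≤ C)
    (y : Fin n → ℝ) :
    legendre (fun x => halfSqNorm x + φ x) y = halfSqNorm y - moreauEnvelope φ y := by
  obtain ⟨x₀, hx₀⟩ := exists_forall_le_add_halfSqNorm_sub hφ hC y
  have hmin : moreauEnvelope φ y = φ x₀ + halfSqNorm (x₀ - y) :=
    IsLeast.csInf_eq ⟨⟨x₀, rfl⟩, by rintro _ ⟨x, rfl⟩; exact hx₀ x⟩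
  rw [hmin, ← dotProduct_sub_halfSqNorm_add]
  exact legendre_eq_of_forall_le fun x => by
    simpa only [dotProduct_sub_halfSqNorm_add, sub_le_sub_iff_left] using hx₀ x

theorem ZPer.moreauEnvelope (hper : ZPer φ) : ZPer (moreauEnvelope φ) := by
  intro y k
  set c : Fin n → ℝ := fun i => (k i : ℝ)
  have hshift : (fun x => φ x + halfSqNorm (x - (y + c))) ∘ (· + c) =
      fun x => φ x + halfSqNorm (x - y) :=
    funext fun x => by simp only [Function.comp_apply, hper x k, add_sub_add_right_eq_sub, c]
  rw [_root_.moreauEnvelope, _root_.moreauEnvelope, ← hshift]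
  exact congrArg sInf ((Equiv.addRight c).surjective.range_comp _).symm

end Periodic

end

theorem legendre_transform_structure {n : ℕ} (φ : (Fin n → ℝ) → ℝ)
    (hφ : ContDiff ℝ (⊤ : ℕ∞) φ) (hper : ZPer φ)
    (hpos : ∀ x, (hess (fun y => (1 / 2 : ℝ) * ∑ i, y i ^ 2 + φ y) x).PosDef) :
    Function.Bijective
      (fun x : Fin n → ℝ =>
        fun i => pd i (fun y => (1 / 2 : ℝ) * ∑ j, y j ^ 2 + φ y) x) ∧
    (∀ (x : Fin n → ℝ) (k : Fin n → ℤ), ∀ i,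
      pd i (fun y => (1 / 2 : ℝ) * ∑ j, y j ^ 2 + φ y) (x + fun i => (k i : ℝ)) =
        pd i (fun y => (1 / 2 : ℝ) * ∑ j, y j ^ 2 + φ y) x + (k i : ℝ)) ∧
    ContDiff ℝ (⊤ : ℕ∞)
      (fun y : Fin n → ℝ =>
        sSup (Set.range fun x : Fin n → ℝ =>
          ∑ i, y i * x i - ((1 / 2 : ℝ) * ∑ j, x j ^ 2 + φ x))) ∧
    ∃ ψ : (Fin n → ℝ) → ℝ, ContDiff ℝ (⊤ : ℕ∞) ψ ∧ ZPer ψ ∧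
      (∀ y, sSup (Set.range fun x : Fin n → ℝ =>
          ∑ i, y i * x i - ((1 / 2 : ℝ) * ∑ j, x j ^ 2 + φ x)) =
        (1 / 2 : ℝ) * ∑ i, y i ^ 2 + ψ y) ∧
      (∀ x, sSup (Set.range fun z : Fin n → ℝ =>
          ∑ i, pd i (fun y => (1 / 2 : ℝ) * ∑ j, y j ^ 2 + φ y) x * z i -
            ((1 / 2 : ℝ) * ∑ j, z j ^ 2 + φ z)) +
          ((1 / 2 : ℝ) * ∑ j, x j ^ 2 + φ x) =
        ∑ i, pd i (fun y => (1 / 2 : ℝ) * ∑ j, y j ^ 2 + φ y) x * x i) := by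
  obtain ⟨C, hC⟩ := hper.exists_abs_le hφ.continuous
  have hu : ContDiff ℝ (⊤ : ℕ∞) fun y => halfSqNorm y + φ y := contDiff_halfSqNorm.add hφ
  have hu₂ : ContDiff ℝ 2 fun y => halfSqNorm y + φ y := hu.of_le (WithTop.coe_le_coe.2 le_top)
  have hmax := exists_forall_dotProduct_sub_le hφ.continuous hC
  have hv : ContDiff ℝ (⊤ : ℕ∞) (legendre fun y => halfSqNorm y + φ y) :=
    contDiff_legendre (WithTop.coe_le_coe.2 le_top) (by simpa using hu) hpos hmax
  have hbij := grad_bijective_of_posDef hu₂ hpos hmax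
  have hshift := hper.grad_halfSqNorm_add_add_intCast (hφ.differentiable (by simp))
  refine ⟨hbij, fun x k => congrFun (hshift x k), hv, fun y => -moreauEnvelope φ y, ?_,
    fun y k => congrArg Neg.neg (hper.moreauEnvelope y k), fun y => ?_,
    legendre_grad_add (hu₂.differentiable two_ne_zero) hbij.1 hmax⟩
  · convert hv.sub (contDiff_halfSqNorm (m := (⊤ : ℕ∞))) using 1
    funext y
    rw [legendre_halfSqNorm_add hφ.continuous hC]
    ring
  · exact (legendre_halfSqNorm_add hφ.continuous hC y).trans (sub_eq_add_neg _ _)
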